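/- Let z = (y₁ i, y₂ i) ∈ ℍ × ℍ with y₁, y₂ > 0, and consider the embedding g(t,x,y) = (x + i e^t y₁, y + i e^{-t} y₂) of ℝ³ into ℍ × ℍ. The pullback under g of the metric (dx₁² + dy₁²)/(2y₁²) + (dx₂² + dy₂²)/(2y₂²) on ℍ × ℍ equals dt² + (e^{-2t}/(2y₁²)) dx² + (e^{2t}/(2y₂²)) dy². In particular, when y₁ = y₂ = 1/√2 this pullback equals the Sol metric dt² + e^{-2t} dx² + e^{2t} dy². -/

import Mathlib

/-- The embedding `g(t,x,y) = (x + i e^t y₁, y + i e^{-t} y₂)` of ℝ³ into ℍ × ℍ,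
written in real coordinates `(x₁, y₁, x₂, y₂)`. -/
noncomputable def leafEmbed (y₁ y₂ : ℝ) (p : ℝ × ℝ × ℝ) : ℝ × ℝ × ℝ × ℝ :=
  (p.2.1, Real.exp p.1 * y₁, p.2.2, Real.exp (-p.1) * y₂)

/-- The metric `(dx₁² + dy₁²)/(2y₁²) + (dx₂² + dy₂²)/(2y₂²)` on ℍ × ℍ, as a
quadratic form on tangent vectors `u` at the point `w`. -/
noncomputable def halfHypMetric (w u : ℝ × ℝ × ℝ × ℝ) : ℝ :=
  (u.1 ^ 2 + u.2.1 ^ 2) / (2 * w.2.1 ^ 2) + (u.2.2.1 ^ 2 + u.2.2.2 ^ 2) / (2 * w.2.2.2 ^ 2)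

/-! The ∂ₜ-direction moves only the heights `e^t y₁` and `e^{-t} y₂`, at unit logarithmic speed,
so each factor contributes `dt²/2` and the halving makes the sum exactly `dt²`; the `x`- and
`y`-directions are scaled by the inverse squared heights. -/

open Real

theorem fderiv_leafEmbed_apply (y₁ y₂ : ℝ) (p v : ℝ × ℝ × ℝ) :
    fderiv ℝ (leafEmbed y₁ y₂) p v =
      (v.2.1, exp p.1 * y₁ * v.1, v.2.2, -(exp (-p.1) * y₂ * v.1)) := by
  have ht := hasFDerivAt_fst (𝕜 := ℝ) (p := p)
  have hx := (hasFDerivAt_snd (𝕜 := ℝ) (p := p)).fst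
  have hy := (hasFDerivAt_snd (𝕜 := ℝ) (p := p)).snd
  have hg : HasFDerivAt (leafEmbed y₁ y₂) _ p :=
    hx.prodMk ((ht.exp.mul_const y₁).prodMk (hy.prodMk (ht.neg.exp.mul_const y₂)))
  rw [hg.fderiv]
  simp [mul_comm, mul_left_comm]

theorem halfHypMetric_leafEmbed_fderiv {y₁ y₂ : ℝ} (hy₁ : y₁ ≠ 0) (hy₂ : y₂ ≠ 0)
    (p v : ℝ × ℝ × ℝ) :
    halfHypMetric (leafEmbed y₁ y₂ p) (fderiv ℝ (leafEmbed y₁ y₂) p v) =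
      v.1 ^ 2 + exp (-2 * p.1) / (2 * y₁ ^ 2) * v.2.1 ^ 2
        + exp (2 * p.1) / (2 * y₂ ^ 2) * v.2.2 ^ 2 := by
  have h2 : exp (2 * p.1) = exp p.1 ^ 2 := by exact_mod_cast exp_nat_mul p.1 2
  rw [fderiv_leafEmbed_apply, halfHypMetric, leafEmbed, neg_mul, exp_neg, exp_neg, h2]
  field_simp
  ring

/-- The pullback under `g` of the half-product hyperbolic metric on ℍ × ℍ equals
`dt² + (e^{-2t}/(2y₁²)) dx² + (e^{2t}/(2y₂²)) dy²`; in particular, for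
`y₁ = y₂ = 1/√2` it is the Sol metric `dt² + e^{-2t} dx² + e^{2t} dy²`. -/
theorem pullback_metric_leaf (y₁ y₂ : ℝ) (hy₁ : 0 < y₁) (hy₂ : 0 < y₂) :
    (∀ (p v : ℝ × ℝ × ℝ),
      halfHypMetric (leafEmbed y₁ y₂ p) (fderiv ℝ (leafEmbed y₁ y₂) p v) =
        v.1 ^ 2 + Real.exp (-2 * p.1) / (2 * y₁ ^ 2) * v.2.1 ^ 2
          + Real.exp (2 * p.1) / (2 * y₂ ^ 2) * v.2.2 ^ 2) ∧
    (y₁ = 1 / Real.sqrt 2 → y₂ = 1 / Real.sqrt 2 →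
      ∀ (p v : ℝ × ℝ × ℝ),
        halfHypMetric (leafEmbed y₁ y₂ p) (fderiv ℝ (leafEmbed y₁ y₂) p v) =
          v.1 ^ 2 + Real.exp (-2 * p.1) * v.2.1 ^ 2 + Real.exp (2 * p.1) * v.2.2 ^ 2) := by
  have key := halfHypMetric_leafEmbed_fderiv hy₁.ne' hy₂.ne'
  refine ⟨key, ?_⟩
  rintro rfl rfl p v
  have hsol : 2 * (1 / √2) ^ 2 = (1 : ℝ) := by
    rw [div_pow, one_pow, sq_sqrt zero_le_two]
    norm_num
  rw [key, hsol, div_one, div_one]
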